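/- Let s = (v, n) be a centered isotropic random vector in R^{d₁+d₂} with signal part v ∈ R^{d₁} and noise part n ∈ R^{d₂}. Suppose y is square-integrable, is a function of v alone (y = G(v)), and y is independent of n. Then for every z = (z_v, z_n) ∈ R^{d₁+d₂}: ‖E[(y − ⟨s, z⟩) s]‖² = ‖E[(y − ⟨v, z_v⟩) v]‖² + ‖z_n‖². -/

import Mathlib

open MeasureTheory ProbabilityTheory RealInnerProductSpace

/-- Noisy-data decomposition of the mismatch covariance: with
`s = (v, n)` centered isotropic in `ℝ^{d₁+d₂}`, `y = G(v)` square-integrable and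
independent of the noise `n`, for every `z = (z_v, z_n)` the squared mismatch covariance
splits as `‖E[(y − ⟨s,z⟩) s]‖² = ‖E[(y − ⟨v,z_v⟩) v]‖² + ‖z_n‖²` (stated blockwise). -/
theorem noisy_data_mismatch_decomposition
    {Ω : Type*} [MeasurableSpace Ω] (μ : Measure Ω) [IsProbabilityMeasure μ]
    {d₁ d₂ : ℕ} (v : Ω → EuclideanSpace ℝ (Fin d₁)) (n : Ω → EuclideanSpace ℝ (Fin d₂))
    (hv_meas : AEMeasurable v μ) (hn_meas : AEMeasurable n μ)
    (hv_L2 : MemLp v 2 μ) (hn_L2 : MemLp n 2 μ)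
    (hv_centered : ∫ ω, v ω ∂μ = 0) (hn_centered : ∫ ω, n ω ∂μ = 0)
    -- isotropy of the joint vector s = (v, n):
    (hv_isotropic : ∀ u u' : EuclideanSpace ℝ (Fin d₁),
      ∫ ω, ⟪v ω, u⟫ * ⟪v ω, u'⟫ ∂μ = ⟪u, u'⟫)
    (hn_isotropic : ∀ w w' : EuclideanSpace ℝ (Fin d₂),
      ∫ ω, ⟪n ω, w⟫ * ⟪n ω, w'⟫ ∂μ = ⟪w, w'⟫)
    (hvn_uncorrelated : ∀ (u : EuclideanSpace ℝ (Fin d₁)) (w : EuclideanSpace ℝ (Fin d₂)),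
      ∫ ω, ⟪v ω, u⟫ * ⟪n ω, w⟫ ∂μ = 0)
    (y : Ω → ℝ) (hy_L2 : MemLp y 2 μ)
    (G : EuclideanSpace ℝ (Fin d₁) → ℝ) (hG_meas : Measurable G)
    (hyG : ∀ ω, y ω = G (v ω))
    (hy_indep_n : IndepFun y n μ)
    (zv : EuclideanSpace ℝ (Fin d₁)) (zn : EuclideanSpace ℝ (Fin d₂)) :
    ‖∫ ω, (y ω - ⟪v ω, zv⟫ - ⟪n ω, zn⟫) • v ω ∂μ‖ ^ 2
      + ‖∫ ω, (y ω - ⟪v ω, zv⟫ - ⟪n ω, zn⟫) • n ω ∂μ‖ ^ 2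
    = ‖∫ ω, (y ω - ⟪v ω, zv⟫) • v ω ∂μ‖ ^ 2 + ‖zn‖ ^ 2 := by
  have half : (1 : ENNReal) / 1 = 1 / 2 + 1 / 2 := by
    rw [ENNReal.add_halves, one_div_one]
  have hvz : MemLp (fun ω => ⟪v ω, zv⟫) 2 μ := hv_L2.inner_const zv
  have hnz : MemLp (fun ω => ⟪n ω, zn⟫) 2 μ := hn_L2.inner_const zn
  have hf1 : MemLp (fun ω => y ω - ⟪v ω, zv⟫) 2 μ := hy_L2.sub hvz
  have hf2 : MemLp (fun ω => y ω - ⟪v ω, zv⟫ - ⟪n ω, zn⟫) 2 μ := hf1.sub hnz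
  -- product of two L² functions (scalar × vector) is integrable
  have hsmul : ∀ {d : ℕ} {f : Ω → ℝ} {g : Ω → EuclideanSpace ℝ (Fin d)},
      MemLp f 2 μ → MemLp g 2 μ → Integrable (fun ω => f ω • g ω) μ := by
    intro d f g hf hg
    exact (hg.smul hf (r := 1)).integrable le_rfl
  have hmul : ∀ {f g : Ω → ℝ},
      MemLp f 2 μ → MemLp g 2 μ → Integrable (fun ω => f ω * g ω) μ := by
    intro f g hf hg
    exact (hg.smul hf (r := 1)).integrable le_rfl
  -- E[⟪n,zn⟫ • v] = 0
  have key1 : ∫ ω, ⟪n ω, zn⟫ • v ω ∂μ = 0 := by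
    apply integral_eq_zero_of_forall_integral_inner_eq_zero ℝ _ (hsmul hnz hv_L2)
    intro c
    have : ∀ ω, ⟪c, ⟪n ω, zn⟫ • v ω⟫ = ⟪v ω, c⟫ * ⟪n ω, zn⟫ := by
      intro ω
      rw [real_inner_smul_right, real_inner_comm c (v ω), mul_comm]
    simp_rw [this]
    exact hvn_uncorrelated c zn
  -- E[y • n] = 0
  have key2 : ∫ ω, y ω • n ω ∂μ = 0 := by
    apply integral_eq_zero_of_forall_integral_inner_eq_zero ℝ _ (hsmul hy_L2 hn_L2)
    intro c
    have h1 : ∀ ω, ⟪c, y ω • n ω⟫ = y ω * ⟪c, n ω⟫ := fun ω => by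
      rw [real_inner_smul_right]
    simp_rw [h1]
    have hind : IndepFun y (fun ω => ⟪c, n ω⟫) μ := by
      have hm : Measurable (fun x : EuclideanSpace ℝ (Fin d₂) => ⟪c, x⟫) :=
        (Continuous.inner continuous_const continuous_id).measurable
      exact hy_indep_n.comp measurable_id hm
    have hprod := hind.integral_mul_eq_mul_integral (hy_L2.integrable one_le_two).aestronglyMeasurable
      ((hn_L2.const_inner c).integrable one_le_two).aestronglyMeasurable
    have hzero : ∫ ω, ⟪c, n ω⟫ ∂μ = 0 := by
      rw [integral_inner (hn_L2.integrable one_le_two) c, hn_centered, inner_zero_right]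
    calc ∫ x, y x * ⟪c, n x⟫ ∂μ = (∫ x, y x ∂μ) * ∫ x, ⟪c, n x⟫ ∂μ := hprod
    _ = 0 := by rw [hzero, mul_zero]
  -- E[⟪v,zv⟫ • n] = 0
  have key3 : ∫ ω, ⟪v ω, zv⟫ • n ω ∂μ = 0 := by
    apply integral_eq_zero_of_forall_integral_inner_eq_zero ℝ _ (hsmul hvz hn_L2)
    intro c
    have : ∀ ω, ⟪c, ⟪v ω, zv⟫ • n ω⟫ = ⟪v ω, zv⟫ * ⟪n ω, c⟫ := by
      intro ω
      rw [real_inner_smul_right, real_inner_comm c (n ω)]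
    simp_rw [this]
    exact hvn_uncorrelated zv c
  -- E[⟪n,zn⟫ • n] = zn
  have key4 : ∫ ω, ⟪n ω, zn⟫ • n ω ∂μ = zn := by
    apply ext_inner_left ℝ
    intro c
    rw [← integral_inner (hsmul hnz hn_L2) c]
    have : ∀ ω, ⟪c, ⟪n ω, zn⟫ • n ω⟫ = ⟪n ω, zn⟫ * ⟪n ω, c⟫ := by
      intro ω
      rw [real_inner_smul_right, real_inner_comm c (n ω)]
    simp_rw [this]
    rw [hn_isotropic zn c, real_inner_comm]
  -- first integral equals the reduced one
  have eq1 : ∫ ω, (y ω - ⟪v ω, zv⟫ - ⟪n ω, zn⟫) • v ω ∂μ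
      = ∫ ω, (y ω - ⟪v ω, zv⟫) • v ω ∂μ := by
    have : ∀ ω, (y ω - ⟪v ω, zv⟫ - ⟪n ω, zn⟫) • v ω
        = (y ω - ⟪v ω, zv⟫) • v ω - ⟪n ω, zn⟫ • v ω := fun ω => by
      rw [sub_smul]
    simp_rw [this]
    rw [integral_sub (hsmul hf1 hv_L2) (hsmul hnz hv_L2), key1, sub_zero]
  -- second integral equals -zn
  have eq2 : ∫ ω, (y ω - ⟪v ω, zv⟫ - ⟪n ω, zn⟫) • n ω ∂μ = -zn := by
    have : ∀ ω, (y ω - ⟪v ω, zv⟫ - ⟪n ω, zn⟫) • n ω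
        = y ω • n ω - ⟪v ω, zv⟫ • n ω - ⟪n ω, zn⟫ • n ω := fun ω => by
      rw [sub_smul, sub_smul]
    simp_rw [this]
    have hA : Integrable (fun ω => y ω • n ω - ⟪v ω, zv⟫ • n ω) μ :=
      (hsmul hy_L2 hn_L2).sub (hsmul hvz hn_L2)
    rw [integral_sub hA (hsmul hnz hn_L2),
      integral_sub (hsmul hy_L2 hn_L2) (hsmul hvz hn_L2),
      key2, key3, key4, sub_zero, zero_sub]
  rw [eq1, eq2, norm_neg]
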